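/- arXiv:2112.00408 — 3 statements merged into one kernel-verified Lean document; each statement's English description precedes it below -/
import Mathlib

section
/- Weak triangle inequality for p-DTW: let (X,ρ) be a metric space, let m₁, m₂ ≥ 2 be natural numbers, let x and z be point sequences over X each of complexity at most m₁, let y be a point sequence over X of complexity m₂, and let p ∈ [1,∞). Then dtw_p(x,z) ≤ m₁^{1/p} · ( dtw_p(x,y) + dtw_p(y,z) ). -/
open scoped BigOperators

/-- An `(m₁, m₂)`-warping (with 0-based indices): a sequence of index pairs starting at
`(0,0)`, ending at `(m₁-1, m₂-1)`, whose consecutive increments lie in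
`{(0,1), (1,0), (1,1)}`. -/
def IsWarping (m₁ m₂ : ℕ) (W : List (ℕ × ℕ)) : Prop :=
  W ≠ [] ∧ W.head? = some (0, 0) ∧ W.getLast? = some (m₁ - 1, m₂ - 1) ∧
    ∀ k, k + 1 < W.length →
      W.getD (k + 1) (0, 0) = ((W.getD k (0, 0)).1, (W.getD k (0, 0)).2 + 1) ∨
      W.getD (k + 1) (0, 0) = ((W.getD k (0, 0)).1 + 1, (W.getD k (0, 0)).2) ∨
      W.getD (k + 1) (0, 0) = ((W.getD k (0, 0)).1 + 1, (W.getD k (0, 0)).2 + 1)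

/-- The cost `Σ_{(i,j) ∈ W} ρ(σ_i, τ_j)^p` of a warping `W`. -/
noncomputable def warpCost {X : Type*} [MetricSpace X] [Inhabited X]
    (p : ℝ) (σ τ : List X) (W : List (ℕ × ℕ)) : ℝ :=
  (W.map fun ij => dist (σ.getD ij.1 default) (τ.getD ij.2 default) ^ p).sum

/-- The `p`-dynamic time warping distance between two point sequences. -/
noncomputable def dtw {X : Type*} [MetricSpace X] [Inhabited X] (p : ℝ) (σ τ : List X) : ℝ :=
  sInf { c : ℝ | ∃ W, IsWarping σ.length τ.length W ∧ c = warpCost p σ τ W ^ (1 / p) }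

/-- `cost_p^q(T, c) = Σ_{τ ∈ T} dtw_p(c, τ)^q`. -/
noncomputable def dtwCost {X : Type*} [MetricSpace X] [Inhabited X]
    (p q : ℝ) (T : Finset (List X)) (c : List X) : ℝ :=
  ∑ τ ∈ T, dtw p c τ ^ q

/-- `σ` is a point sequence of complexity at most `ℓ`, i.e. `σ ∈ X^{≤ℓ}`. -/
def SeqLE {X : Type*} (ℓ : ℕ) (σ : List X) : Prop := 2 ≤ σ.length ∧ σ.length ≤ ℓ

/-!
Compose warpings `W₁` of `(x, y)` and `W₂` of `(y, z)` by walking along both at once while keeping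
their `y`-indices equal; the `(x, z)`-projection of this walk is a warping `V` of `(x, z)` in
which every pair `(i, k)` has a middle index `j` with `(i, j) ∈ W₁` and `(j, k) ∈ W₂`. The
triangle inequality and Minkowski's inequality bound the cost of `V` by the `p`-norms of
`ρ(x_i, y_j)` and `ρ(y_j, z_k)` over `V`. As `V` repeats no pair, each `(i, j) ∈ W₁` is hit by at
most `|z| ≤ m₁` pairs of `V` and each `(j, k) ∈ W₂` by at most `|x| ≤ m₁`.
-/

def WarpStep (a b : ℕ × ℕ) : Prop :=
  b = (a.1, a.2 + 1) ∨ b = (a.1 + 1, a.2) ∨ b = (a.1 + 1, a.2 + 1)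

theorem WarpStep.lt {a b : ℕ × ℕ} (h : WarpStep a b) : a < b := by
  rcases h with rfl | rfl | rfl <;> simp [Prod.lt_iff]

theorem WarpStep.fst_eq_or {a b : ℕ × ℕ} (h : WarpStep a b) : b.1 = a.1 ∨ b.1 = a.1 + 1 := by
  rcases h with rfl | rfl | rfl <;> simp

theorem WarpStep.snd_eq_or {a b : ℕ × ℕ} (h : WarpStep a b) : b.2 = a.2 ∨ b.2 = a.2 + 1 := by
  rcases h with rfl | rfl | rfl <;> simp

theorem warpStep_or_eq {a b : ℕ × ℕ} (h₁ : b.1 = a.1 ∨ b.1 = a.1 + 1)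
    (h₂ : b.2 = a.2 ∨ b.2 = a.2 + 1) : a = b ∨ WarpStep a b := by
  obtain ⟨b₁, b₂⟩ := b
  simp only [WarpStep, Prod.ext_iff] at h₁ h₂ ⊢
  omega

inductive WarpPath : ℕ × ℕ → ℕ × ℕ → List (ℕ × ℕ) → Prop
  | single (a : ℕ × ℕ) : WarpPath a a [a]
  | cons {a b t : ℕ × ℕ} {W : List (ℕ × ℕ)} : WarpStep a b → WarpPath b t W → WarpPath a t (a :: W)

namespace WarpPath

variable {s t : ℕ × ℕ} {W : List (ℕ × ℕ)}

theorem le (h : WarpPath s t W) : s ≤ t := by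
  induction h with
  | single a => exact le_rfl
  | cons hab _ ih => exact hab.lt.le.trans ih

theorem le_of_mem (h : WarpPath s t W) {v : ℕ × ℕ} (hv : v ∈ W) : s ≤ v ∧ v ≤ t := by
  induction h with
  | single a => simp_all
  | cons hab hW ih =>
    rcases List.mem_cons.mp hv with rfl | hv
    · exact ⟨le_rfl, hab.lt.le.trans hW.le⟩
    · exact ⟨hab.lt.le.trans (ih hv).1, (ih hv).2⟩

theorem nodup (h : WarpPath s t W) : W.Nodup := by
  induction h with
  | single a => simp
  | cons hab hW ih =>
    exact List.nodup_cons.mpr ⟨fun ha => (hab.lt.trans_le (hW.le_of_mem ha).1).false, ih⟩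

theorem iff_isChain :
    WarpPath s t W ↔ W.head? = some s ∧ W.getLast? = some t ∧ W.IsChain WarpStep := by
  constructor
  · intro h
    induction h with
    | single a => simp
    | cons hab _ ih =>
      obtain ⟨hhead, hlast, hchain⟩ := ih
      obtain ⟨W, rfl⟩ := List.head?_eq_some_iff.mp hhead
      exact ⟨rfl, by rwa [List.getLast?_cons_cons], List.isChain_cons_cons.mpr ⟨hab, hchain⟩⟩
  · rintro ⟨hhead, hlast, hchain⟩
    induction W generalizing s with
    | nil => simp at hhead
    | cons a W ih =>
      obtain rfl : a = s := by simpa using hhead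
      cases W with
      | nil =>
        obtain rfl : a = t := by simpa using hlast
        exact single a
      | cons b W =>
        rw [List.isChain_cons_cons] at hchain
        exact cons hchain.1 (ih rfl (by rwa [List.getLast?_cons_cons] at hlast) hchain.2)

end WarpPath

theorem isWarping_iff_warpPath {m n : ℕ} {W : List (ℕ × ℕ)} :
    IsWarping m n W ↔ WarpPath (0, 0) (m - 1, n - 1) W := by
  have hsteps : (∀ k, k + 1 < W.length →
      W.getD (k + 1) (0, 0) = ((W.getD k (0, 0)).1, (W.getD k (0, 0)).2 + 1) ∨
      W.getD (k + 1) (0, 0) = ((W.getD k (0, 0)).1 + 1, (W.getD k (0, 0)).2) ∨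
      W.getD (k + 1) (0, 0) = ((W.getD k (0, 0)).1 + 1, (W.getD k (0, 0)).2 + 1)) ↔
      W.IsChain WarpStep := by
    rw [List.isChain_iff_getElem]
    refine forall_congr' fun k => ⟨fun h hk => ?_, fun h hk => ?_⟩ <;>
    simpa [List.getElem?_eq_getElem hk, List.getElem?_eq_getElem (Nat.lt_of_succ_lt hk),
      WarpStep] using h hk
  rw [WarpPath.iff_isChain, IsWarping, hsteps]
  constructor
  · exact fun ⟨_, h⟩ => h
  · rintro ⟨hhead, h⟩
    exact ⟨by rintro rfl; simp at hhead, hhead, h⟩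

theorem exists_warpPath (i j m n : ℕ) : ∃ W, WarpPath (i, j) (i + m, j + n) W := by
  induction m generalizing i with
  | zero =>
    induction n generalizing j with
    | zero => exact ⟨_, .single _⟩
    | succ n ih =>
      obtain ⟨W, hW⟩ := ih (j + 1)
      exact ⟨_, .cons (Or.inl rfl) (by rwa [add_right_comm j 1 n] at hW)⟩
  | succ m ih =>
    obtain ⟨W, hW⟩ := ih (i + 1)
    exact ⟨_, .cons (Or.inr (Or.inl rfl)) (by rwa [add_right_comm i 1 m] at hW)⟩

theorem exists_isWarping (m n : ℕ) : ∃ W, IsWarping m n W := by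
  simpa [isWarping_iff_warpPath] using exists_warpPath 0 0 (m - 1) (n - 1)

namespace WarpPath

/-- The composed walk stalls in `(i, k)` when only the middle index moves, so `u` may equal
`(a.1, b.2)`. -/
theorem exists_comp_cons {a b u t : ℕ × ℕ} {W₁ W₂ V : List (ℕ × ℕ)} (ha : a ∈ W₁) (hb : b ∈ W₂)
    (hab : a.2 = b.1) (hu₁ : u.1 = a.1 ∨ u.1 = a.1 + 1) (hu₂ : u.2 = b.2 ∨ u.2 = b.2 + 1)
    (hV : WarpPath u t V) (hmid : ∀ v ∈ V, ∃ j, (v.1, j) ∈ W₁ ∧ (j, v.2) ∈ W₂) :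
    ∃ V', WarpPath (a.1, b.2) t V' ∧ ∀ v ∈ V', ∃ j, (v.1, j) ∈ W₁ ∧ (j, v.2) ∈ W₂ := by
  rcases warpStep_or_eq (a := (a.1, b.2)) hu₁ hu₂ with rfl | hstep
  · exact ⟨V, hV, hmid⟩
  · refine ⟨_, .cons hstep hV, List.forall_mem_cons.mpr ⟨⟨a.2, ha, ?_⟩, hmid⟩⟩
    rwa [hab]

theorem exists_comp {s₁ t₁ s₂ t₂ : ℕ × ℕ} {W₁ W₂ : List (ℕ × ℕ)}
    (h₁ : WarpPath s₁ t₁ W₁) (h₂ : WarpPath s₂ t₂ W₂) (hs : s₁.2 = s₂.1) (ht : t₁.2 = t₂.1) :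
    ∃ V, WarpPath (s₁.1, s₂.2) (t₁.1, t₂.2) V ∧ ∀ v ∈ V, ∃ j, (v.1, j) ∈ W₁ ∧ (j, v.2) ∈ W₂ := by
  induction h₁ generalizing s₂ t₂ W₂ with
  | single a =>
    induction h₂ with
    | single b =>
      refine ⟨_, .single _, ?_⟩
      simp only [List.mem_singleton, forall_eq]
      exact ⟨a.2, rfl, by rw [hs]⟩
    | @cons b b' t₂ W hbb' hW ih =>
      have hb' : b'.1 = b.1 := le_antisymm (hs ▸ ht ▸ hW.le.1) hbb'.lt.le.1
      obtain ⟨V, hV, hmid⟩ := ih (hs.trans hb'.symm) ht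
      exact exists_comp_cons (u := (a.1, b'.2)) (List.mem_singleton_self a) List.mem_cons_self hs
        (Or.inl rfl) hbb'.snd_eq_or hV fun v hv => (hmid v hv).imp fun _ hj => ⟨hj.1, .tail _ hj.2⟩
  | @cons a a' t₁ W₁ haa' hW₁ ih₁ =>
    induction h₂ with
    | single b =>
      have ha' : a'.2 = a.2 := le_antisymm (hs ▸ ht ▸ hW₁.le.2) haa'.lt.le.2
      obtain ⟨V, hV, hmid⟩ := ih₁ (.single b) (ha'.trans hs) ht
      exact exists_comp_cons (u := (a'.1, b.2)) List.mem_cons_self (List.mem_singleton_self b) hs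
        haa'.fst_eq_or (Or.inl rfl) hV fun v hv => (hmid v hv).imp fun _ hj => ⟨.tail _ hj.1, hj.2⟩
    | @cons b b' t₂ W₂ hbb' hW₂ ih₂ =>
      by_cases ha' : a'.2 = a.2
      · obtain ⟨V, hV, hmid⟩ := ih₁ (.cons hbb' hW₂) (ha'.trans hs) ht
        exact exists_comp_cons (u := (a'.1, b.2)) List.mem_cons_self List.mem_cons_self hs
          haa'.fst_eq_or (Or.inl rfl) hV
          fun v hv => (hmid v hv).imp fun _ hj => ⟨.tail _ hj.1, hj.2⟩
      by_cases hb' : b'.1 = b.1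
      · obtain ⟨V, hV, hmid⟩ := ih₂ (hs.trans hb'.symm) ht
        exact exists_comp_cons (u := (a.1, b'.2)) List.mem_cons_self List.mem_cons_self hs
          (Or.inl rfl) hbb'.snd_eq_or hV
          fun v hv => (hmid v hv).imp fun _ hj => ⟨hj.1, .tail _ hj.2⟩
      · have hmid' : a'.2 = b'.1 := by
          rcases haa' with rfl | rfl | rfl <;> rcases hbb' with rfl | rfl | rfl <;> simp_all
        obtain ⟨V, hV, hmid⟩ := ih₁ hW₂ hmid' ht
        exact exists_comp_cons (u := (a'.1, b'.2)) List.mem_cons_self List.mem_cons_self hs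
          haa'.fst_eq_or hbb'.snd_eq_or hV
          fun v hv => (hmid v hv).imp fun _ hj => ⟨.tail _ hj.1, .tail _ hj.2⟩

end WarpPath

open Finset

theorem Finset.sum_comp_le_nsmul_sum {ι κ M : Type*} [DecidableEq κ] [AddCommMonoid M]
    [PartialOrder M] [IsOrderedAddMonoid M] {S : Finset ι} {A : Finset κ} {π : ι → κ}
    {idx : ι → ℕ} {n : ℕ} {f : κ → M} (hπ : ∀ i ∈ S, π i ∈ A) (hidx : ∀ i ∈ S, idx i < n)
    (hinj : ∀ i ∈ S, ∀ j ∈ S, π i = π j → idx i = idx j → i = j) (hf : ∀ a ∈ A, 0 ≤ f a) :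
    ∑ i ∈ S, f (π i) ≤ n • ∑ a ∈ A, f a := by
  rw [← sum_fiberwise_of_maps_to hπ, smul_sum]
  refine sum_le_sum fun a ha => ?_
  have hfiber : #{i ∈ S | π i = a} ≤ n := by
    simpa using card_le_card_of_injOn idx (t := range n)
      (fun i hi => mem_range.2 (hidx i (mem_filter.1 hi).1))
      fun i hi j hj hij => hinj i (mem_filter.1 hi).1 j (mem_filter.1 hj).1
        ((mem_filter.1 hi).2.trans (mem_filter.1 hj).2.symm) hij
  calc ∑ i ∈ S with π i = a, f (π i) = #{i ∈ S | π i = a} • f a :=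
        sum_eq_card_nsmul fun i hi => by rw [(mem_filter.1 hi).2]
    _ ≤ n • f a := nsmul_le_nsmul_left (hf a ha) hfiber

section Dtw

variable {X : Type*} [MetricSpace X] [Inhabited X] {p : ℝ} {σ τ : List X} {W : List (ℕ × ℕ)}

theorem warpCost_eq_sum_toFinset (hW : W.Nodup) :
    warpCost p σ τ W = ∑ w ∈ W.toFinset, dist (σ.getD w.1 default) (τ.getD w.2 default) ^ p :=
  (List.sum_toFinset _ hW).symm

theorem warpCost_nonneg : 0 ≤ warpCost p σ τ W :=
  List.sum_nonneg fun _ hc => by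
    obtain ⟨_, -, rfl⟩ := List.mem_map.1 hc
    exact Real.rpow_nonneg dist_nonneg _

theorem dtw_le_warpCost_rpow (hW : IsWarping σ.length τ.length W) :
    dtw p σ τ ≤ warpCost p σ τ W ^ (1 / p) := by
  refine csInf_le ⟨0, ?_⟩ ⟨W, hW, rfl⟩
  rintro _ ⟨W, -, rfl⟩
  exact Real.rpow_nonneg warpCost_nonneg _

theorem le_dtw {c : ℝ}
    (h : ∀ W, IsWarping σ.length τ.length W → c ≤ warpCost p σ τ W ^ (1 / p)) :
    c ≤ dtw p σ τ := by
  obtain ⟨W, hW⟩ := exists_isWarping σ.length τ.length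
  refine le_csInf ⟨_, W, hW, rfl⟩ ?_
  rintro _ ⟨W, hW, rfl⟩
  exact h W hW

theorem dtw_le_rpow_mul_add {m : ℕ} {x y z : List X} {W₁ W₂ : List (ℕ × ℕ)} (hm : 1 ≤ m)
    (hxm : x.length ≤ m) (hzm : z.length ≤ m) (hp : 1 ≤ p)
    (h₁ : IsWarping x.length y.length W₁) (h₂ : IsWarping y.length z.length W₂) :
    dtw p x z ≤
      (m : ℝ) ^ (1 / p) * (warpCost p x y W₁ ^ (1 / p) + warpCost p y z W₂ ^ (1 / p)) := by
  rw [isWarping_iff_warpPath] at h₁ h₂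
  obtain ⟨V, hV, hmid⟩ := h₁.exists_comp h₂ rfl rfl
  choose! g hg₁ hg₂ using hmid
  set F : ℕ × ℕ → ℝ := fun v => dist (x.getD v.1 default) (y.getD (g v) default)
  set G : ℕ × ℕ → ℝ := fun v => dist (y.getD (g v) default) (z.getD v.2 default)
  have hF : ∑ v ∈ V.toFinset, F v ^ p ≤ m * warpCost p x y W₁ := by
    rw [warpCost_eq_sum_toFinset h₁.nodup, ← nsmul_eq_mul]
    refine sum_comp_le_nsmul_sum (π := fun v => (v.1, g v)) (idx := Prod.snd)
      (f := fun w => dist (x.getD w.1 default) (y.getD w.2 default) ^ p)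
      (fun v hv => List.mem_toFinset.2 (hg₁ v (List.mem_toFinset.1 hv))) (fun v hv => ?_)
      (fun v _ w _ h hvw => Prod.ext (Prod.ext_iff.1 h).1 hvw) fun _ _ => by positivity
    have := (hV.le_of_mem (List.mem_toFinset.1 hv)).2.2
    simp only at this
    omega
  have hG : ∑ v ∈ V.toFinset, G v ^ p ≤ m * warpCost p y z W₂ := by
    rw [warpCost_eq_sum_toFinset h₂.nodup, ← nsmul_eq_mul]
    refine sum_comp_le_nsmul_sum (π := fun v => (g v, v.2)) (idx := Prod.fst)
      (f := fun w => dist (y.getD w.1 default) (z.getD w.2 default) ^ p)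
      (fun v hv => List.mem_toFinset.2 (hg₂ v (List.mem_toFinset.1 hv))) (fun v hv => ?_)
      (fun v _ w _ h hvw => Prod.ext hvw (Prod.ext_iff.1 h).2) fun _ _ => by positivity
    have := (hV.le_of_mem (List.mem_toFinset.1 hv)).2.1
    simp only at this
    omega
  calc dtw p x z ≤ warpCost p x z V ^ (1 / p) :=
        dtw_le_warpCost_rpow (isWarping_iff_warpPath.2 hV)
    _ ≤ (∑ v ∈ V.toFinset, (F v + G v) ^ p) ^ (1 / p) := by
        rw [warpCost_eq_sum_toFinset hV.nodup]
        gcongr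
        exact dist_triangle _ _ _
    _ ≤ (∑ v ∈ V.toFinset, F v ^ p) ^ (1 / p) + (∑ v ∈ V.toFinset, G v ^ p) ^ (1 / p) :=
        Real.Lp_add_le_of_nonneg _ hp (fun _ _ => dist_nonneg) fun _ _ => dist_nonneg
    _ ≤ (m * warpCost p x y W₁) ^ (1 / p) + (m * warpCost p y z W₂) ^ (1 / p) := by
        gcongr
    _ = _ := by
        rw [Real.mul_rpow (by positivity) warpCost_nonneg,
          Real.mul_rpow (by positivity) warpCost_nonneg, mul_add]

end Dtw

theorem weak_triangle_inequality_general {X : Type*} [MetricSpace X] [Inhabited X]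
    (m₁ : ℕ) (hm₁ : 2 ≤ m₁)
    (x z y : List X)
    (hxm : x.length ≤ m₁)
    (hzm : z.length ≤ m₁)
    (p : ℝ) (hp : 1 ≤ p) :
    dtw p x z ≤ (m₁ : ℝ) ^ (1 / p) * (dtw p x y + dtw p y z) := by
  have hM : 0 < (m₁ : ℝ) ^ (1 / p) := Real.rpow_pos_of_pos (by positivity) _
  suffices h : dtw p x z / (m₁ : ℝ) ^ (1 / p) - dtw p y z ≤ dtw p x y by
    rw [sub_le_iff_le_add, div_le_iff₀' hM] at h
    linarith
  refine le_dtw fun W₁ hW₁ => sub_le_comm.1 <| le_dtw fun W₂ hW₂ => ?_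
  rw [sub_le_iff_le_add', div_le_iff₀' hM]
  exact dtw_le_rpow_mul_add (by omega) hxm hzm hp hW₁ hW₂

/-- **Weak triangle inequality for p-DTW** (Lemma `lem:asymtriangineq2`):
for point sequences `x, z` of complexity at most `m₁` and `y` of complexity `m₂`,
`dtw_p(x,z) ≤ m₁^{1/p} (dtw_p(x,y) + dtw_p(y,z))`. -/
theorem weak_triangle_inequality {X : Type*} [MetricSpace X] [Inhabited X]
    (m₁ m₂ : ℕ) (hm₁ : 2 ≤ m₁) (hm₂ : 2 ≤ m₂)
    (x z y : List X)
    (hx : 2 ≤ x.length) (hxm : x.length ≤ m₁)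
    (hz : 2 ≤ z.length) (hzm : z.length ≤ m₁)
    (hy : y.length = m₂)
    (p : ℝ) (hp : 1 ≤ p) :
    dtw p x z ≤ (m₁ : ℝ) ^ (1 / p) * (dtw p x y + dtw p y z) :=
  weak_triangle_inequality_general m₁ hm₁ x z y hxm hzm p hp
end

section
/- Non-asymptotic grid covering bound for Euclidean balls: let d ≥ 1 be an integer, let x ∈ ℝ^d, and let r > 0 and γ > 0 be real numbers. Then the number of grid points in the grid of cell width γ covering the Euclidean ball B(x, 8r) satisfies |𝔾(B(x,8r), γ)| ≤ 2 · ( 34r/(γ√d) + 5 )^d. -/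
/-!
The preimages `gridPt⁻¹' {g}` of the grid points `g` are disjoint half-open cubes of volume `γ^d`
and diameter at most `γ√d`. Those of the grid points of `B(x, 8r)` therefore all lie in
`B(x, R)` with `R = 8r + γ√d`, so `|𝔾| γ^d ≤ vol B(x, R)`. Markov's inequality for the Gaussian
`exp (-b‖v‖²)`, whose integral is `(π/b)^{d/2}`, gives with `b = d/(2R²)` the bound
`vol B(x, R) ≤ (√(2πe/d) R)^d`, and `√(2πe) < 17/4` turns `√(2πe/d) R` into at most
`γ (34r/(γ√d) + 5)`.
-/

/-- The `γ`-grid-point of `x ∈ ℝ^d`: `G(γ,x) = (⌊x₁/γ⌋·γ, …, ⌊x_d/γ⌋·γ)`. -/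
noncomputable def gridPt (d : ℕ) (γ : ℝ) (x : EuclideanSpace ℝ (Fin d)) :
    EuclideanSpace ℝ (Fin d) :=
  WithLp.toLp 2 (fun i => (⌊x i / γ⌋ : ℝ) * γ)

/-- The grid of cell width `γ` covering `P ⊆ ℝ^d`: `𝔾(P,γ) = {G(γ,x) : x ∈ P}`. -/
noncomputable def gridOf (d : ℕ) (P : Set (EuclideanSpace ℝ (Fin d))) (γ : ℝ) :
    Set (EuclideanSpace ℝ (Fin d)) :=
  gridPt d γ '' P

open MeasureTheory Metric Real Module Finset

section Grid

variable {d : ℕ} {γ : ℝ}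

@[simp]
theorem gridPt_apply (y : EuclideanSpace ℝ (Fin d)) (i : Fin d) :
    gridPt d γ y i = ⌊y i / γ⌋ * γ := rfl

theorem gridPt_eq_gridPt_iff (hγ : 0 < γ) {y z : EuclideanSpace ℝ (Fin d)} :
    gridPt d γ z = gridPt d γ y ↔ ∀ i, z i ∈ Set.Ico (gridPt d γ y i) (gridPt d γ y i + γ) := by
  have hfloor : ∀ i,
      ⌊z i / γ⌋ = ⌊y i / γ⌋ ↔ z i ∈ Set.Ico (gridPt d γ y i) (gridPt d γ y i + γ) := by
    intro i
    rw [Int.floor_eq_iff, le_div_iff₀ hγ, div_lt_iff₀ hγ, gridPt_apply, Set.mem_Ico, add_mul,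
      one_mul]
  simp_rw [← hfloor, WithLp.ext_iff, funext_iff]
  refine forall_congr' fun i => ?_
  rw [gridPt_apply, gridPt_apply, mul_left_inj' hγ.ne', Int.cast_inj]

theorem dist_le_of_gridPt_eq (hγ : 0 < γ) {y z : EuclideanSpace ℝ (Fin d)}
    (h : gridPt d γ z = gridPt d γ y) : dist z y ≤ γ * √d := by
  have hz := (gridPt_eq_gridPt_iff hγ).1 h
  have hy := (gridPt_eq_gridPt_iff hγ).1 (rfl : gridPt d γ y = gridPt d γ y)
  have hcoord : ∀ i, dist (z i) (y i) ≤ γ := by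
    intro i
    obtain ⟨hz₁, hz₂⟩ := hz i
    obtain ⟨hy₁, hy₂⟩ := hy i
    rw [Real.dist_eq, abs_le]
    constructor <;> linarith
  calc dist z y = √(∑ i, dist (z i) (y i) ^ 2) := EuclideanSpace.dist_eq z y
    _ ≤ √(∑ _i : Fin d, γ ^ 2) := by gcongr with i; exact hcoord i
    _ = γ * √d := by
      rw [sum_const, card_univ, Fintype.card_fin, nsmul_eq_mul, sqrt_mul (Nat.cast_nonneg d),
        sqrt_sq hγ.le, mul_comm]

theorem gridPt_preimage_singleton (hγ : 0 < γ) (y : EuclideanSpace ℝ (Fin d)) :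
    gridPt d γ ⁻¹' {gridPt d γ y} = (MeasurableEquiv.toLp 2 (Fin d → ℝ)).symm ⁻¹'
      Set.univ.pi fun i => Set.Ico (gridPt d γ y i) (gridPt d γ y i + γ) := by
  ext z
  simp [gridPt_eq_gridPt_iff hγ]

theorem measurableSet_gridPt_preimage_singleton (hγ : 0 < γ) (y : EuclideanSpace ℝ (Fin d)) :
    MeasurableSet (gridPt d γ ⁻¹' {gridPt d γ y}) := by
  rw [gridPt_preimage_singleton hγ]
  exact (MeasurableSet.univ_pi fun i => measurableSet_Ico).preimage (MeasurableEquiv.measurable _)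

theorem volume_gridPt_preimage_singleton (hγ : 0 < γ) (y : EuclideanSpace ℝ (Fin d)) :
    volume (gridPt d γ ⁻¹' {gridPt d γ y}) = ENNReal.ofReal (γ ^ d) := by
  rw [gridPt_preimage_singleton hγ,
    (EuclideanSpace.volume_preserving_symm_measurableEquiv_toLp (Fin d)).measure_preimage
      (MeasurableSet.univ_pi fun i => measurableSet_Ico).nullMeasurableSet,
    volume_pi_pi]
  simp [ENNReal.ofReal_pow hγ.le]

theorem gridPt_preimage_gridOf_subset_cthickening (hγ : 0 < γ)
    (P : Set (EuclideanSpace ℝ (Fin d))) :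
    gridPt d γ ⁻¹' gridOf d P γ ⊆ cthickening (γ * √d) P := by
  rintro z ⟨y, hy, hzy⟩
  exact mem_cthickening_of_dist_le z y _ P hy (dist_le_of_gridPt_eq hγ hzy.symm)

variable {P : Set (EuclideanSpace ℝ (Fin d))}

theorem card_mul_pow_le_measureReal_cthickening (hγ : 0 < γ)
    (hP : volume (cthickening (γ * √d) P) ≠ ⊤) {F : Finset (EuclideanSpace ℝ (Fin d))}
    (hF : ↑F ⊆ gridOf d P γ) : #F * γ ^ d ≤ volume.real (cthickening (γ * √d) P) := by
  have hcell : ∀ g ∈ F, volume (gridPt d γ ⁻¹' {g}) = ENNReal.ofReal (γ ^ d) := by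
    intro g hg
    obtain ⟨y, -, rfl⟩ := hF hg
    exact volume_gridPt_preimage_singleton hγ y
  calc (#F : ℝ) * γ ^ d = ∑ g ∈ F, volume.real (gridPt d γ ⁻¹' {g}) := by
        rw [sum_congr rfl fun g hg => by rw [measureReal_def, hcell g hg,
          ENNReal.toReal_ofReal (by positivity)], sum_const, nsmul_eq_mul]
    _ = volume.real (gridPt d γ ⁻¹' F) := by
        refine sum_measureReal_preimage_singleton F (fun g hg => ?_) fun g hg => ?_
        · obtain ⟨y, -, rfl⟩ := hF hg
          exact measurableSet_gridPt_preimage_singleton hγ y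
        · simp [hcell g hg]
    _ ≤ volume.real (cthickening (γ * √d) P) :=
        measureReal_mono ((Set.preimage_mono hF).trans
          (gridPt_preimage_gridOf_subset_cthickening hγ P)) hP

theorem finite_gridOf (hγ : 0 < γ) (hP : volume (cthickening (γ * √d) P) ≠ ⊤) :
    (gridOf d P γ).Finite := by
  by_contra hinf
  obtain ⟨n, hn⟩ := exists_nat_gt (volume.real (cthickening (γ * √d) P) / γ ^ d)
  obtain ⟨F, hF, rfl⟩ := Set.Infinite.exists_subset_card_eq hinf n
  have := card_mul_pow_le_measureReal_cthickening hγ hP hF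
  rw [div_lt_iff₀ (by positivity)] at hn
  linarith

theorem natCard_gridOf_mul_pow_le (hγ : 0 < γ) (hP : volume (cthickening (γ * √d) P) ≠ ⊤) :
    Nat.card (gridOf d P γ) * γ ^ d ≤ volume.real (cthickening (γ * √d) P) := by
  have hfin := finite_gridOf hγ hP
  rw [Nat.card_coe_set_eq, Set.ncard_eq_toFinset_card _ hfin]
  exact card_mul_pow_le_measureReal_cthickening hγ hP (by simp)

end Grid

section GaussianBound

variable {V : Type*} [NormedAddCommGroup V] [InnerProductSpace ℝ V] [FiniteDimensional ℝ V]
  [MeasurableSpace V] [BorelSpace V]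

theorem measureReal_closedBall_le_exp_mul (x : V) {R b : ℝ} (hR : 0 ≤ R) (hb : 0 < b) :
    volume.real (closedBall x R) ≤ exp (b * R ^ 2) * (π / b) ^ (finrank ℝ V / 2 : ℝ) := by
  have hgauss := GaussianFourier.integral_rexp_neg_mul_sq_norm (V := V) hb
  have hint : Integrable fun v : V => exp (-b * ‖v‖ ^ 2) :=
    Integrable.of_integral_ne_zero (by rw [hgauss]; positivity)
  have hmarkov := mul_meas_ge_le_integral_of_nonneg
    (Filter.Eventually.of_forall fun v => (exp_pos _).le) hint (exp (-b * R ^ 2))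
  have hlevel : {v : V | exp (-b * R ^ 2) ≤ exp (-b * ‖v‖ ^ 2)} = closedBall 0 R := by
    ext v
    rw [Set.mem_ofPred_eq, exp_le_exp, neg_mul, neg_mul, neg_le_neg_iff,
      mul_le_mul_iff_right₀ hb, pow_le_pow_iff_left₀ (norm_nonneg v) hR two_ne_zero,
      mem_closedBall_zero_iff]
  rw [hlevel] at hmarkov
  rw [measureReal_def, Measure.addHaar_closedBall_center, ← measureReal_def]
  calc volume.real (closedBall (0 : V) R)
      = exp (b * R ^ 2) * (exp (-b * R ^ 2) * volume.real (closedBall (0 : V) R)) := by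
        rw [← mul_assoc, ← exp_add]; simp
    _ ≤ exp (b * R ^ 2) * (π / b) ^ (finrank ℝ V / 2 : ℝ) := by
        gcongr
        exact hmarkov.trans hgauss.le

theorem measureReal_closedBall_le (hV : 0 < finrank ℝ V) (x : V) {R : ℝ} (hR : 0 < R) :
    volume.real (closedBall x R) ≤ (√(2 * π * exp 1 / finrank ℝ V) * R) ^ finrank ℝ V := by
  set d := finrank ℝ V
  have hd : (0 : ℝ) < d := by exact_mod_cast hV
  refine (measureReal_closedBall_le_exp_mul x hR.le
    (b := d / (2 * R ^ 2)) (by positivity)).trans_eq ?_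
  have hbR : d / (2 * R ^ 2) * R ^ 2 = (d / 2 : ℝ) := by field_simp
  rw [hbR, ← exp_one_rpow, ← mul_rpow (exp_pos 1).le (by positivity),
    rpow_div_two_eq_sqrt _ (by positivity), rpow_natCast,
    show exp 1 * (π / (d / (2 * R ^ 2))) = 2 * π * exp 1 / d * R ^ 2 by field_simp,
    sqrt_mul (by positivity), sqrt_sq hR.le]

end GaussianBound

theorem sqrt_two_mul_pi_mul_exp_one_lt : √(2 * π * exp 1) < 17 / 4 := by
  rw [sqrt_lt' (by norm_num)]
  nlinarith [pi_lt_d2, exp_one_lt_d9, pi_pos, exp_pos 1]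

/-- **Non-asymptotic grid covering bound for Euclidean balls** (Lemma `lem:volumebound`):
`|𝔾(B(x,8r),γ)| ≤ 2 (34r/(γ√d) + 5)^d`. -/
theorem grid_covering_ball_bound (d : ℕ) (hd : 1 ≤ d)
    (x : EuclideanSpace ℝ (Fin d)) (r γ : ℝ) (hr : 0 < r) (hγ : 0 < γ) :
    (Nat.card (gridOf d (Metric.closedBall x (8 * r)) γ) : ℝ) ≤
      2 * (34 * r / (γ * Real.sqrt d) + 5) ^ d := by
  set A := 34 * r / (γ * √d) + 5
  have hd' : (0 : ℝ) < d := by exact_mod_cast hd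
  have hthick : cthickening (γ * √d) (closedBall x (8 * r)) = closedBall x (8 * r + γ * √d) := by
    rw [cthickening_closedBall (by positivity) (by positivity), add_comm]
  have hcount := natCard_gridOf_mul_pow_le hγ (P := closedBall x (8 * r))
    (by rw [hthick]; exact measure_closedBall_lt_top.ne)
  have hvol := measureReal_closedBall_le (V := EuclideanSpace ℝ (Fin d))
    (by rwa [finrank_euclideanSpace_fin]) x (R := 8 * r + γ * √d) (by positivity)
  rw [finrank_euclideanSpace_fin] at hvol
  have hrad : √(2 * π * exp 1 / d) * (8 * r + γ * √d) ≤ γ * A := by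
    have hs := sqrt_two_mul_pi_mul_exp_one_lt
    rw [sqrt_div' _ hd'.le]
    have hA : γ * A = 34 * r / √d + 5 * γ := by simp only [A]; field_simp
    have hL : √(2 * π * exp 1) / √d * (8 * r + γ * √d) =
        √(2 * π * exp 1) * 8 * r / √d + √(2 * π * exp 1) * γ := by field_simp
    rw [hA, hL]
    gcongr <;> linarith
  have hcard : (Nat.card (gridOf d (closedBall x (8 * r)) γ) : ℝ) * γ ^ d ≤ A ^ d * γ ^ d :=
    calc _ ≤ volume.real (closedBall x (8 * r + γ * √d)) := hthick ▸ hcount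
      _ ≤ (√(2 * π * exp 1 / d) * (8 * r + γ * √d)) ^ d := hvol
      _ ≤ (γ * A) ^ d := by gcongr
      _ = A ^ d * γ ^ d := by rw [mul_pow, mul_comm]
  calc _ ≤ A ^ d := le_of_mul_le_mul_right hcard (by positivity)
    _ ≤ 2 * A ^ d := le_mul_of_one_le_left (by positivity) one_le_two
end

section
/- Lower bound for the Gamma function: for every real number z > 0, Γ(z) ≥ √(2π) · z^{z−1/2} · e^{−z}. -/
/-!
Binet's function `μ(x) = log Γ(x) - (x - 1/2) log x + x - log(2π)/2` is the error in Stirling's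
formula for `log Γ`. The inequality `log (1 + 1/x) ≥ 2/(2x + 1)` makes `μ` decrease under
`x ↦ x + 1`, so `μ(z) ≥ μ(z + n)` for every `n`. Log-convexity of `Γ` compares `log Γ(m + t)`
with `log m!`, and Stirling's lower bound for `m!` then gives `μ(m + t) ≥ -t/(2m)`; letting
`n → ∞` yields `μ(z) ≥ 0`, which is the claim after exponentiating.
-/

open Real Filter

noncomputable def binet (x : ℝ) : ℝ :=
  log (Gamma x) - (x - 1 / 2) * log x + x - log (2 * π) / 2

theorem two_div_two_mul_add_one_le_log_one_add_inv {x : ℝ} (hx : 0 < x) :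
    2 / (2 * x + 1) ≤ log (1 + x⁻¹) := by
  simpa [div_eq_mul_inv] using le_hasSum (hasSum_log_one_add_inv hx) 0 fun k _ => by positivity

theorem log_Gamma_add_one {x : ℝ} (hx : 0 < x) :
    log (Gamma (x + 1)) = log (Gamma x) + log x := by
  rw [Gamma_add_one hx.ne', log_mul hx.ne' (Gamma_pos_of_pos hx).ne', add_comm]

theorem binet_add_one_le {x : ℝ} (hx : 0 < x) : binet (x + 1) ≤ binet x := by
  have hlog : log (1 + x⁻¹) = log (x + 1) - log x := by
    rw [← log_div (by positivity) hx.ne', add_div, div_self hx.ne', one_div]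
  have key : 1 ≤ (x + 1 / 2) * (log (x + 1) - log x) := by
    calc (1 : ℝ) = (x + 1 / 2) * (2 / (2 * x + 1)) := by field_simp
      _ ≤ (x + 1 / 2) * (log (x + 1) - log x) := by
        rw [← hlog]
        gcongr
        exact two_div_two_mul_add_one_le_log_one_add_inv hx
  simp only [binet, log_Gamma_add_one hx]
  linarith

theorem binet_add_nat_le {x : ℝ} (hx : 0 < x) (n : ℕ) : binet (x + n) ≤ binet x := by
  induction n with
  | zero => simp
  | succ n ih =>
    push_cast
    rw [← add_assoc]
    exact (binet_add_one_le (by positivity)).trans ih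

theorem log_Gamma_add_le {x s : ℝ} (hx : 0 < x) (hs₀ : 0 ≤ s) (hs₁ : s ≤ 1) :
    log (Gamma (x + s)) ≤ log (Gamma x) + s * log x := by
  have h := convexOn_log_Gamma.2 (Set.mem_Ioi.2 hx) (Set.mem_Ioi.2 (by linarith : 0 < x + 1))
    (sub_nonneg.2 hs₁) hs₀ (by ring)
  rw [show (1 - s) • x + s • (x + 1) = x + s by simp only [smul_eq_mul]; ring] at h
  simp only [Function.comp_apply, smul_eq_mul, log_Gamma_add_one hx] at h
  linarith

theorem neg_div_le_binet_nat_add {m : ℕ} (hm : m ≠ 0) {t : ℝ} (ht₀ : 0 ≤ t) (ht₁ : t ≤ 1) :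
    -(t / (2 * m)) ≤ binet (m + t) := by
  have hm₀ : (0 : ℝ) < m := by positivity
  have hconv : log m.factorial ≤ log (Gamma (m + t)) + (1 - t) * log (m + t) := by
    rw [← Gamma_nat_eq_factorial, show (m : ℝ) + 1 = m + t + (1 - t) by ring]
    exact log_Gamma_add_le (by positivity) (by linarith) (by linarith)
  have hlog : log (m + t) - log m ≤ t / m := by
    rw [← log_div (by positivity) hm₀.ne']
    calc log ((m + t) / m) ≤ (m + t) / m - 1 := log_le_sub_one_of_pos (by positivity)
      _ = t / m := by field_simp; ring
  have hlog' : (m + 1 / 2) * (log (m + t) - log m) ≤ t + t / (2 * m) := by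
    calc (m + 1 / 2) * (log (m + t) - log m) ≤ (m + 1 / 2) * (t / m) := by gcongr
      _ = t + t / (2 * m) := by field_simp
  have hstirling := Stirling.le_log_factorial_stirling hm
  simp only [binet]
  linarith

theorem binet_nonneg {z : ℝ} (hz : 0 < z) : 0 ≤ binet z := by
  set m := ⌊z⌋₊
  have ht₀ : 0 ≤ z - m := sub_nonneg.2 (Nat.floor_le hz.le)
  have ht₁ : z - m ≤ 1 := by linarith [Nat.lt_floor_add_one z]
  have hbound (n : ℕ) : -(1 / ((n : ℝ) + 1)) ≤ binet z := by
    have hmn : (0 : ℝ) < ↑(m + n + 1) := by positivity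
    have hsmall : (z - m) / (2 * ↑(m + n + 1)) ≤ 1 / ((n : ℝ) + 1) :=
      calc (z - m) / (2 * ↑(m + n + 1)) ≤ 1 / ↑(m + n + 1) := by
            rw [div_le_div_iff₀ (by positivity) hmn]; nlinarith
        _ ≤ 1 / ((n : ℝ) + 1) := by gcongr; push_cast; linarith [(m.cast_nonneg : (0 : ℝ) ≤ m)]
    calc -(1 / ((n : ℝ) + 1)) ≤ -((z - m) / (2 * ↑(m + n + 1))) := neg_le_neg hsmall
      _ ≤ binet (↑(m + n + 1) + (z - m)) := neg_div_le_binet_nat_add (by omega) ht₀ ht₁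
      _ = binet (z + ↑(n + 1)) := by push_cast; ring_nf
      _ ≤ binet z := binet_add_nat_le hz _
  simpa using le_of_tendsto' tendsto_one_div_add_atTop_nhds_zero_nat.neg hbound

/-- **Lower bound for the Gamma function**: for all `z > 0`,
`Γ(z) ≥ √(2π) · z^(z - 1/2) · e^(-z)`. -/
theorem gamma_lower_bound (z : ℝ) (hz : 0 < z) :
    Real.sqrt (2 * Real.pi) * z ^ (z - 1 / 2) * Real.exp (-z) ≤ Real.Gamma z := by
  have hμ := binet_nonneg hz
  rw [binet] at hμ
  calc √(2 * π) * z ^ (z - 1 / 2) * exp (-z)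
      = exp (log (2 * π) / 2 + (z - 1 / 2) * log z - z) := by
        rw [sqrt_eq_rpow, rpow_def_of_pos (by positivity), rpow_def_of_pos hz, ← exp_add,
          ← exp_add]
        ring_nf
    _ ≤ exp (log (Gamma z)) := exp_le_exp.2 (by linarith)
    _ = Gamma z := exp_log (Gamma_pos_of_pos hz)
end
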